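/- arXiv:math/0509192 — 7 statements merged into one kernel-verified Lean document; each statement's English description precedes it below -/
import Mathlib

section
/- Lerch's identity: for nonnegative integers q, r, p with p ≥ q and p ≥ s for all relevant s (so that binomial coefficients in denominators are nonzero), we have ∑_{s=0}^{q} (-1)^s · (C(q,s)·C(r,s))/C(p,s) = C(p−r, q)/C(p, q). -/
/-!
Since `C(q,s) / C(p,s) = C(p-s,q-s) / C(p,q)`, the identity reduces to
`∑ₛ (-1)^s C(r,s) C(x-s,q-s) = C(x-r,q)`, which holds in any binomial ring: upper negation
turns `C(x-s,q-s)` into `(-1)^(q-s) C(q-x-1,q-s)`, so the sum becomes a Chu–Vandermonde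
convolution, and a second upper negation brings `C(r+q-x-1,q)` back to `C(x-r,q)`.
-/

open Finset

theorem Ring.choose_eq_neg_one_pow_mul_choose {R : Type*} [CommRing R] [BinomialRing R]
    (y : R) (n : ℕ) :
    Ring.choose y n = (-1) ^ n * Ring.choose (n - y - 1) n := by
  have h := Ring.choose_neg (-y) n
  rw [neg_neg, Units.smul_def, Int.coe_negOnePow_natCast] at h
  rw [h, zsmul_eq_mul]
  push_cast
  ring_nf

theorem Ring.sum_neg_one_pow_mul_choose_mul_choose_sub {R : Type*} [CommRing R] [BinomialRing R]
    (x : R) (q r : ℕ) :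
    ∑ s ∈ range (q + 1), (-1) ^ s * (r.choose s : R) * Ring.choose (x - s) (q - s) =
      Ring.choose (x - r) q := by
  calc ∑ s ∈ range (q + 1), (-1) ^ s * (r.choose s : R) * Ring.choose (x - s) (q - s)
      = ∑ s ∈ range (q + 1),
          (-1) ^ q * (Ring.choose (r : R) s * Ring.choose (q - x - 1) (q - s)) := by
        refine sum_congr rfl fun s hs => ?_
        have hsq : s ≤ q := Nat.lt_succ_iff.mp (mem_range.mp hs)
        rw [Ring.choose_eq_neg_one_pow_mul_choose (x - s), Ring.choose_natCast,
          ← pow_sub_mul_pow (-1 : R) hsq, Nat.cast_sub hsq]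
        ring_nf
    _ = (-1) ^ q * Ring.choose (r + (q - x - 1)) q := by
        rw [← mul_sum, Ring.add_choose_eq q (Commute.all _ _),
          Nat.sum_antidiagonal_eq_sum_range_succ
            (fun i j => Ring.choose (r : R) i * Ring.choose (q - x - 1) j)]
    _ = Ring.choose (x - r) q := by
        rw [Ring.choose_eq_neg_one_pow_mul_choose (x - r)]
        ring_nf

theorem Ring.choose_eq_prod_range_div_factorial {K : Type*} [Field K] [CharZero K]
    (x : K) (n : ℕ) :
    Ring.choose x n = (∏ i ∈ range n, (x - i)) / n.factorial := by
  rw [Ring.choose_eq_smul, ← Polynomial.aeval_eq_smeval, Polynomial.aeval_def,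
    ← Polynomial.eval_map, descPochhammer_map, descPochhammer_eval_eq_prod_range, smul_eq_mul,
    inv_mul_eq_div]

theorem Nat.cast_choose_div_cast_choose {K : Type*} [Field K] [CharZero K] {p q s : ℕ}
    (hsq : s ≤ q) (hqp : q ≤ p) :
    (q.choose s : K) / p.choose s = (p - s).choose (q - s) / p.choose q := by
  have hps : (p.choose s : K) ≠ 0 := Nat.cast_ne_zero.mpr (Nat.choose_pos (hsq.trans hqp)).ne'
  have hpq : (p.choose q : K) ≠ 0 := Nat.cast_ne_zero.mpr (Nat.choose_pos hqp).ne'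
  rw [div_eq_div_iff hps hpq]
  exact_mod_cast (by rw [mul_comm, Nat.choose_mul hsq, mul_comm] :
    q.choose s * p.choose q = (p - s).choose (q - s) * p.choose s)

/-- Lerch's identity: for nonnegative integers `q ≤ p` and `r`,
`∑_{s=0}^{q} (-1)^s C(q,s)C(r,s)/C(p,s) = C(p−r,q)/C(p,q)`,
where the right-hand side is expressed via generalized binomial coefficients as
`∏_{i<q} (p−r−i) / ∏_{i<q} (p−i)`. -/
theorem lerch_identity (p q r : ℕ) (hpq : q ≤ p) :
    ∑ s ∈ Finset.range (q + 1),
        (-1 : ℚ) ^ s * ((q.choose s : ℚ) * (r.choose s : ℚ)) / (p.choose s : ℚ)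
      = (∏ i ∈ Finset.range q, ((p : ℚ) - r - i)) /
        (∏ i ∈ Finset.range q, ((p : ℚ) - i)) := by
  calc _ = (∑ s ∈ range (q + 1),
          (-1) ^ s * (r.choose s : ℚ) * Ring.choose ((p : ℚ) - s) (q - s)) / p.choose q := by
        rw [sum_div]
        refine sum_congr rfl fun s hs => ?_
        have hsq : s ≤ q := Nat.lt_succ_iff.mp (mem_range.mp hs)
        rw [mul_comm (q.choose s : ℚ), ← mul_assoc, mul_div_assoc,
          Nat.cast_choose_div_cast_choose hsq hpq,
          ← Nat.cast_sub (hsq.trans hpq), Ring.choose_natCast]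
        ring
    _ = Ring.choose ((p : ℚ) - r) q / Ring.choose (p : ℚ) q := by
        rw [Ring.sum_neg_one_pow_mul_choose_mul_choose_sub, Ring.choose_natCast]
    _ = (∏ i ∈ range q, ((p : ℚ) - r - i)) / ∏ i ∈ range q, ((p : ℚ) - i) := by
        rw [Ring.choose_eq_prod_range_div_factorial, Ring.choose_eq_prod_range_div_factorial,
          div_div_div_cancel_right₀ (Nat.cast_ne_zero.mpr q.factorial_ne_zero)]
end

section
/- For nonnegative integers q ≤ r with q ≥ 1, ∑_{s=0}^{q} ((-1)^{q+r-s}/(q+r-s)) · C(q,s) · C(r,s) · s! · (q+r-s)! = (-1)^{q+r}(q+r-1)! · ∑_{s=0}^q (-1)^s (C(q,s)C(r,s))/C(q+r-1,s), and this equals 0. -/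
open Polynomial Finset

lemma key_sum (q m : ℕ) (hq : 1 ≤ q) :
    ∑ s ∈ Finset.range (q + 1),
      (-1 : ℚ) ^ s * (q.choose s : ℚ) * ((q + m - s).choose (q - 1) : ℚ) = 0 := by
  have hpoly : (X : ℚ[X]) ^ q * (X + 1) ^ m
      = ∑ k ∈ Finset.range (q + 1), (X + 1) ^ (k + m) * ((-1 : ℚ[X]) ^ (q - k) * (q.choose k : ℚ[X])) := by
    have : (X : ℚ[X]) ^ q = ((X + 1) + (-1)) ^ q := by ring
    rw [this, add_pow, Finset.sum_mul]
    refine Finset.sum_congr rfl fun k _ => ?_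
    ring
  have hco := congrArg (fun p => Polynomial.coeff p (q - 1)) hpoly
  rw [Polynomial.finset_sum_coeff] at hco
  have hL : ((X : ℚ[X]) ^ q * (X + 1) ^ m).coeff (q - 1) = 0 := by
    rw [mul_comm, Polynomial.coeff_mul_X_pow']
    simp [Nat.not_le.mpr (Nat.sub_lt hq one_pos)]
  rw [hL] at hco
  have hR : ∀ k ∈ Finset.range (q + 1),
      ((X + 1 : ℚ[X]) ^ (k + m) * ((-1 : ℚ[X]) ^ (q - k) * (q.choose k : ℚ[X]))).coeff (q - 1)
        = (-1 : ℚ) ^ (q - k) * (q.choose k : ℚ) * ((k + m).choose (q - 1) : ℚ) := by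
    intro k _
    have hc : ((-1 : ℚ[X]) ^ (q - k) * (q.choose k : ℚ[X]))
        = C ((-1 : ℚ) ^ (q - k) * (q.choose k : ℚ)) := by
      simp [map_mul]
    rw [mul_comm, hc, Polynomial.coeff_C_mul, Polynomial.coeff_X_add_one_pow]
  rw [Finset.sum_congr rfl hR] at hco
  have := Finset.sum_range_reflect
    (fun k => (-1 : ℚ) ^ (q - k) * (q.choose k : ℚ) * ((k + m).choose (q - 1) : ℚ)) (q + 1)
  rw [← hco] at this
  rw [← this]
  refine Finset.sum_congr rfl fun s hs => ?_
  have hsq : s ≤ q := Nat.lt_succ_iff.mp (Finset.mem_range.mp hs)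
  have h1 : q + 1 - 1 - s = q - s := by omega
  have h2 : q - (q - s) = s := by omega
  have h3 : q - s + m = q + m - s := by omega
  rw [h1, h2, h3, Nat.choose_symm hsq]

/-- For positive integers `q ≤ r`,
`∑_{s=0}^{q} ((-1)^{q+r-s}/(q+r-s)) C(q,s)C(r,s) s!(q+r-s)!`
equals `(-1)^{q+r}(q+r-1)! ∑_{s=0}^q (-1)^s C(q,s)C(r,s)/C(q+r-1,s)`, and vanishes. -/
theorem signed_sum_vanishes (q r : ℕ) (hq : 1 ≤ q) (hqr : q ≤ r) :
    (∑ s ∈ Finset.range (q + 1),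
        (-1 : ℚ) ^ (q + r - s) / ((q + r - s : ℕ) : ℚ) *
          (q.choose s : ℚ) * (r.choose s : ℚ) * (Nat.factorial s : ℚ) *
          (Nat.factorial (q + r - s) : ℚ))
      = (-1 : ℚ) ^ (q + r) * (Nat.factorial (q + r - 1) : ℚ) *
          ∑ s ∈ Finset.range (q + 1),
            (-1 : ℚ) ^ s * ((q.choose s : ℚ) * (r.choose s : ℚ)) /
              ((q + r - 1).choose s : ℚ)
    ∧ (∑ s ∈ Finset.range (q + 1),
        (-1 : ℚ) ^ (q + r - s) / ((q + r - s : ℕ) : ℚ) *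
          (q.choose s : ℚ) * (r.choose s : ℚ) * (Nat.factorial s : ℚ) *
          (Nat.factorial (q + r - s) : ℚ)) = 0 := by
  -- termwise simplification
  have hterm : ∀ s ∈ Finset.range (q + 1),
      (-1 : ℚ) ^ (q + r - s) / ((q + r - s : ℕ) : ℚ) *
          (q.choose s : ℚ) * (r.choose s : ℚ) * (Nat.factorial s : ℚ) *
          (Nat.factorial (q + r - s) : ℚ)
        = (-1 : ℚ) ^ (q + r - s) * (q.choose s : ℚ) * (r.choose s : ℚ) *
            (Nat.factorial s : ℚ) * (Nat.factorial (q + r - 1 - s) : ℚ) := by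
    intro s hs
    have hsq : s ≤ q := Nat.lt_succ_iff.mp (Finset.mem_range.mp hs)
    have hfac : Nat.factorial (q + r - s) = (q + r - s) * Nat.factorial (q + r - 1 - s) := by
      rw [show q + r - s = (q + r - 1 - s) + 1 by omega, Nat.factorial_succ]
    have hne : ((q + r - s : ℕ) : ℚ) ≠ 0 := Nat.cast_ne_zero.mpr (by omega)
    rw [hfac]
    push_cast
    field_simp
    try ring
  -- first part
  have hpart1 : (∑ s ∈ Finset.range (q + 1),
        (-1 : ℚ) ^ (q + r - s) / ((q + r - s : ℕ) : ℚ) *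
          (q.choose s : ℚ) * (r.choose s : ℚ) * (Nat.factorial s : ℚ) *
          (Nat.factorial (q + r - s) : ℚ))
      = (-1 : ℚ) ^ (q + r) * (Nat.factorial (q + r - 1) : ℚ) *
          ∑ s ∈ Finset.range (q + 1),
            (-1 : ℚ) ^ s * ((q.choose s : ℚ) * (r.choose s : ℚ)) /
              ((q + r - 1).choose s : ℚ) := by
    rw [Finset.sum_congr rfl hterm, Finset.mul_sum]
    refine Finset.sum_congr rfl fun s hs => ?_
    have hsq : s ≤ q := Nat.lt_succ_iff.mp (Finset.mem_range.mp hs)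
    have hsle : s ≤ q + r - 1 := by omega
    have hch : (q + r - 1).choose s * Nat.factorial s * Nat.factorial (q + r - 1 - s)
        = Nat.factorial (q + r - 1) := Nat.choose_mul_factorial_mul_factorial hsle
    have hcne : (((q + r - 1).choose s : ℕ) : ℚ) ≠ 0 := by
      exact_mod_cast (Nat.choose_pos hsle).ne'
    have hsign : (-1 : ℚ) ^ (q + r - s) = (-1 : ℚ) ^ (q + r) * (-1 : ℚ) ^ s := by
      have h : (-1 : ℚ) ^ (q + r - s) * (-1 : ℚ) ^ s = (-1 : ℚ) ^ (q + r) := by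
        rw [← pow_add]; congr 1; omega
      have hs2 : ((-1 : ℚ) ^ s) * ((-1 : ℚ) ^ s) = 1 := by
        rw [← pow_add, Even.neg_one_pow ⟨s, by ring⟩]
      calc (-1 : ℚ) ^ (q + r - s) = (-1 : ℚ) ^ (q + r - s) * (((-1:ℚ)^s) * ((-1:ℚ)^s)) := by
            rw [hs2, mul_one]
        _ = (-1 : ℚ) ^ (q + r) * (-1 : ℚ) ^ s := by rw [← mul_assoc, h]
    have hfac : (Nat.factorial (q + r - 1) : ℚ)
        = ((q + r - 1).choose s : ℚ) * (Nat.factorial s : ℚ) * (Nat.factorial (q + r - 1 - s) : ℚ) := by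
      exact_mod_cast hch.symm
    rw [hsign, hfac]
    field_simp
  refine ⟨hpart1, ?_⟩
  -- second part: vanishing
  rw [Finset.sum_congr rfl hterm]
  have hconst : ∀ s ∈ Finset.range (q + 1),
      (-1 : ℚ) ^ (q + r - s) * (q.choose s : ℚ) * (r.choose s : ℚ) *
          (Nat.factorial s : ℚ) * (Nat.factorial (q + r - 1 - s) : ℚ)
        = ((-1 : ℚ) ^ (q + r) * (Nat.factorial (q - 1) : ℚ) * (Nat.factorial r : ℚ)) *
            ((-1 : ℚ) ^ s * (q.choose s : ℚ) * ((q + (r - 1) - s).choose (q - 1) : ℚ)) := by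
    intro s hs
    have hsq : s ≤ q := Nat.lt_succ_iff.mp (Finset.mem_range.mp hs)
    have hsr : s ≤ r := le_trans hsq hqr
    have hr1 : r.choose s * Nat.factorial s * Nat.factorial (r - s) = Nat.factorial r :=
      Nat.choose_mul_factorial_mul_factorial hsr
    have hadd : ((r - s) + (q - 1)).choose (q - 1) * Nat.factorial (r - s) * Nat.factorial (q - 1)
        = Nat.factorial ((r - s) + (q - 1)) := Nat.add_choose_mul_factorial_mul_factorial _ _
    have he : (r - s) + (q - 1) = q + r - 1 - s := by omega
    have he2 : q + (r - 1) - s = q + r - 1 - s := by omega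
    rw [he] at hadd
    have hsign : (-1 : ℚ) ^ (q + r - s) = (-1 : ℚ) ^ (q + r) * (-1 : ℚ) ^ s := by
      have h : (-1 : ℚ) ^ (q + r - s) * (-1 : ℚ) ^ s = (-1 : ℚ) ^ (q + r) := by
        rw [← pow_add]; congr 1; omega
      have hs2 : ((-1 : ℚ) ^ s) * ((-1 : ℚ) ^ s) = 1 := by
        rw [← pow_add, Even.neg_one_pow ⟨s, by ring⟩]
      calc (-1 : ℚ) ^ (q + r - s) = (-1 : ℚ) ^ (q + r - s) * (((-1:ℚ)^s) * ((-1:ℚ)^s)) := by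
            rw [hs2, mul_one]
        _ = (-1 : ℚ) ^ (q + r) * (-1 : ℚ) ^ s := by rw [← mul_assoc, h]
    have hfac : (Nat.factorial (q + r - 1 - s) : ℚ)
        = ((q + r - 1 - s).choose (q - 1) : ℚ) * (Nat.factorial (r - s) : ℚ) * (Nat.factorial (q - 1) : ℚ) := by
      exact_mod_cast hadd.symm
    have hr1' : (r.choose s : ℚ) * (Nat.factorial s : ℚ) * (Nat.factorial (r - s) : ℚ)
        = (Nat.factorial r : ℚ) := by exact_mod_cast hr1
    rw [hsign, hfac, he2, ← hr1']
    ring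
  rw [Finset.sum_congr rfl hconst, ← Finset.mul_sum]
  have := key_sum q (r - 1) hq
  have hk : ∑ s ∈ Finset.range (q + 1),
      (-1 : ℚ) ^ s * (q.choose s : ℚ) * ((q + (r - 1) - s).choose (q - 1) : ℚ) = 0 := this
  rw [hk, mul_zero]
end

section
/- Let λ_{n,m} be the coefficient of z^m in Φ_n^* (with λ_{n,m} = 0 for m > n, λ_{n,0} = 1 for n ≥ 0). Then for all n ≥ 0 and m ≥ 1, λ_{n+1,m} = λ_{n,m} + ∑_{a=1}^{m−1} α_n·conj(α_{n−a})·λ_{n−a,m−a} + α_n·conj(α_{n−m}), where by convention α_{−1} = −1, α_k = 0 for k ≤ −2, and λ_{k,m} = δ_{m,0} for k < 0. -/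
open Polynomial

/-!
Unrolling `Φ_{n+1} = z Φ_n - conj(α_n) Φ_n^*` down to `Φ_0 = 1` gives
`Φ_n = -∑_{a=1}^{n+1} conj(α_{n-a}) z^{a-1} Φ_{n-a}^*`, the term `a = n + 1` being `z^n` thanks to the
conventions `α_{-1} = -1`, `Φ_{-1}^* = 1`. Reading off the coefficient of `z^{m-1}` and inserting it
into `Φ_{n+1}^* = Φ_n^* - α_n z Φ_n` yields the recursion; its last term is the summand `a = m`,
because every `Φ_k^*` has constant coefficient `1`.
-/

theorem Finset.sum_Ico_one_sub_succ {M : Type*} [AddCommMonoid M] (f : ℤ → ℕ → M) (n : ℤ)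
    (k : ℕ) :
    ∑ a ∈ Finset.Ico 1 (k + 3), f (n + 1 - a) (k + 2 - a) =
      f n (k + 1) + ∑ a ∈ Finset.Ico 1 (k + 2), f (n - a) (k + 1 - a) := by
  rw [Finset.sum_eq_sum_Ico_succ_bot (by omega), ← Finset.sum_Ico_add' _ 1 (k + 2) 1]
  congr 1
  · simp
  · refine Finset.sum_congr rfl fun a _ => ?_
    congr 1
    · push_cast; ring
    · omega

theorem coeff_zero_eq_one_of_rec {R : Type*} [Ring R] {Φ Ψ : ℕ → R[X]} {c : ℕ → R}
    (h0' : Ψ 0 = 1) (hrec' : ∀ n : ℕ, Ψ (n + 1) = Ψ n - C (c n) * X * Φ n) (n : ℕ) :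
    (Ψ n).coeff 0 = 1 := by
  induction n with
  | zero => simp [h0']
  | succ n ih => simp [hrec', mul_assoc, ih]

section Szego

variable {α : ℤ → ℂ} {Φ Ψ : ℕ → ℂ[X]} {lam : ℤ → ℕ → ℂ}

theorem lam_apply_zero (h0' : Ψ 0 = 1) (hrec' : ∀ n : ℕ, Ψ (n + 1) = Ψ n - C (α n) * X * Φ n)
    (hlam : ∀ n m : ℕ, lam n m = (Ψ n).coeff m)
    (hlamneg : ∀ k : ℤ, k < 0 → ∀ m : ℕ, lam k m = if m = 0 then 1 else 0) (j : ℤ) :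
    lam j 0 = 1 := by
  rcases lt_or_ge j 0 with hj | hj
  · simp [hlamneg j hj]
  · lift j to ℕ using hj
    rw [hlam, coeff_zero_eq_one_of_rec h0' hrec']

theorem coeff_Φ_eq_neg_sum (hm1 : α (-1) = -1) (hm2 : ∀ k : ℤ, k ≤ -2 → α k = 0)
    (h0 : Φ 0 = 1) (hrec : ∀ n : ℕ, Φ (n + 1) = X * Φ n - C (starRingEnd ℂ (α n)) * Ψ n)
    (hlam : ∀ n m : ℕ, lam n m = (Ψ n).coeff m)
    (hlamneg : ∀ k : ℤ, k < 0 → ∀ m : ℕ, lam k m = if m = 0 then 1 else 0) (n k : ℕ) :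
    (Φ n).coeff k =
      -∑ a ∈ Finset.Ico 1 (k + 2), starRingEnd ℂ (α (n - a)) * lam (n - a) (k + 1 - a) := by
  induction n generalizing k with
  | zero =>
    have hvanish : ∀ a ∈ Finset.Ico 1 (k + 2), a ≠ 1 →
        starRingEnd ℂ (α ((0 : ℕ) - a)) * lam ((0 : ℕ) - a) (k + 1 - a) = 0 := by
      intro a ha hne
      rw [Finset.mem_Ico] at ha
      rw [hm2 _ (by omega), map_zero, zero_mul]
    rw [Finset.sum_eq_single_of_mem 1 (by simp) hvanish]
    simp only [h0, coeff_one, CharP.cast_eq_zero, zero_sub, Nat.cast_one, hm1,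
      hlamneg (-1) (by norm_num), map_neg, map_one, Nat.add_sub_cancel]
    split_ifs <;> simp
  | succ n ih =>
    cases k with
    | zero => simp [hrec, hlam]
    | succ k =>
      rw [Nat.cast_succ, Finset.sum_Ico_one_sub_succ (fun j i => starRingEnd ℂ (α j) * lam j i)]
      simp only [hrec, coeff_sub, coeff_X_mul, coeff_C_mul, ih, hlam]
      ring

theorem lambda_recursion_general (α : ℤ → ℂ)
    (hm1 : α (-1) = -1) (hm2 : ∀ k : ℤ, k ≤ -2 → α k = 0)
    (Φ Ψ : ℕ → Polynomial ℂ) (h0 : Φ 0 = 1) (h0' : Ψ 0 = 1)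
    (hrec : ∀ n : ℕ, Φ (n + 1) = X * Φ n - C ((starRingEnd ℂ) (α n)) * Ψ n)
    (hrec' : ∀ n : ℕ, Ψ (n + 1) = Ψ n - C (α n) * X * Φ n)
    (lam : ℤ → ℕ → ℂ)
    (hlam : ∀ (n : ℕ) (m : ℕ), lam n m = (Ψ n).coeff m)
    (hlamneg : ∀ (k : ℤ), k < 0 → ∀ m : ℕ, lam k m = if m = 0 then 1 else 0) :
    ∀ (n : ℕ) (m : ℕ), 1 ≤ m →
      lam (n + 1) m = lam n m +
        (∑ a ∈ Finset.Ico 1 m, α n * (starRingEnd ℂ) (α (n - a)) * lam (n - a) (m - a)) +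
        α n * (starRingEnd ℂ) (α (n - m)) := by
  intro n m hm
  obtain ⟨k, rfl⟩ : ∃ k, m = k + 1 := ⟨m - 1, by omega⟩
  have hstep : lam (n + 1) (k + 1) = lam n (k + 1) - α n * (Φ n).coeff k := by
    rw [← Nat.cast_succ, hlam, hlam, hrec', mul_assoc, coeff_sub, coeff_C_mul, coeff_X_mul]
  rw [hstep, coeff_Φ_eq_neg_sum hm1 hm2 h0 hrec hlam hlamneg,
    Finset.sum_Ico_succ_top (by omega), Nat.sub_self, lam_apply_zero h0' hrec' hlam hlamneg]
  simp only [mul_one, mul_add, mul_neg, sub_neg_eq_add, Finset.mul_sum, mul_assoc]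
  ring

/-- The recursion `λ_{n+1,m} = λ_{n,m} + ∑_{a=1}^{m-1} α_n conj(α_{n-a}) λ_{n-a,m-a}
+ α_n conj(α_{n-m})` for the coefficients of the reversed polynomials, with the
conventions `α_{-1} = -1`, `α_k = 0` for `k ≤ -2`, `λ_{k,m} = δ_{m,0}` for `k < 0`. -/
theorem lambda_recursion (α : ℤ → ℂ) (hα : ∀ n : ℤ, 0 ≤ n → ‖α n‖ < 1)
    (hm1 : α (-1) = -1) (hm2 : ∀ k : ℤ, k ≤ -2 → α k = 0)
    (Φ Ψ : ℕ → Polynomial ℂ) (h0 : Φ 0 = 1) (h0' : Ψ 0 = 1)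
    (hrec : ∀ n : ℕ, Φ (n + 1) = X * Φ n - C ((starRingEnd ℂ) (α n)) * Ψ n)
    (hrec' : ∀ n : ℕ, Ψ (n + 1) = Ψ n - C (α n) * X * Φ n)
    (lam : ℤ → ℕ → ℂ)
    (hlam : ∀ (n : ℕ) (m : ℕ), lam n m = (Ψ n).coeff m)
    (hlamneg : ∀ (k : ℤ), k < 0 → ∀ m : ℕ, lam k m = if m = 0 then 1 else 0) :
    ∀ (n : ℕ) (m : ℕ), 1 ≤ m →
      lam (n + 1) m = lam n m +
        (∑ a ∈ Finset.Ico 1 m, α n * (starRingEnd ℂ) (α (n - a)) * lam (n - a) (m - a)) +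
        α n * (starRingEnd ℂ) (α (n - m)) :=
  lambda_recursion_general α hm1 hm2 Φ Ψ h0 h0' hrec hrec' lam hlam hlamneg

end Szego
end

section
/- For m ≥ 1 and all n, the coefficient λ_{n,m} of z^m in Φ_n^* satisfies λ_{n,m} = ∑ over all ordered compositions (a_1,…,a_j) of m into positive parts, and all integer tuples (k_1,…,k_j) with k_1 < n and k_{i+1} < k_i − a_i for each i, of the product α_{k_1}·conj(α_{k_1−a_1})·⋯·α_{k_j}·conj(α_{k_j−a_j}), using the conventions α_{−1} = −1 and α_k = 0 for k ≤ −2. -/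
/-!
Write `L(N, m)` for the right-hand side of the formula with `k₁ < N`, extended by `L(N, 0) = 1`.
Splitting off the first pair `(a₁, k₁)` of a chain shows that the chains counted by `L(N + 1, m)`
but not by `L(N, m)` are those with `k₁ = N`, whence
`L(N + 1, m) = L(N, m) + α_N ∑_{a=1}^{m} conj(α_{N-a}) L(N - a, m - a)`.
This is exactly the coefficientwise form of `Φ*_{n+1} = Φ*_n - α_n z Φ_n`, once the coefficients of
`Φ_n` are expressed through `L` by unrolling `Φ_{n+1} = z Φ_n - conj(α_n) Φ*_n`; both sides start
from `Φ_0 = Φ*_0 = 1` because `L(N, m) = 0` for `N ≤ 0 < m`.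
-/

open Polynomial ComplexConjugate Finset

namespace OPUC

/-- A chain `(a₁, k₁), …, (a_{j+1}, k_{j+1})`, stored as the parts `p.2.1` and the nodes `p.2.2`. -/
abbrev Chain := Σ j : ℕ, (Fin (j + 1) → ℕ) × (Fin (j + 1) → ℤ)

namespace Chain

def single (x : ℕ × ℤ) : Chain := ⟨0, fun _ => x.1, fun _ => x.2⟩

def cons (x : ℕ × ℤ) (q : Chain) : Chain := ⟨q.1 + 1, Fin.cons x.1 q.2.1, Fin.cons x.2 q.2.2⟩

@[simp]
theorem node_zero_single (x : ℕ × ℤ) : (single x).2.2 0 = x.2 := rfl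

@[simp]
theorem node_zero_cons (x : ℕ × ℤ) (q : Chain) : (cons x q).2.2 0 = x.2 := rfl

def equivSumCons : (ℕ × ℤ) ⊕ (ℕ × ℤ) × Chain ≃ Chain where
  toFun := Sum.elim single fun y => cons y.1 y.2
  invFun
    | ⟨0, a, k⟩ => .inl (a 0, k 0)
    | ⟨j + 1, a, k⟩ => .inr ((a 0, k 0), ⟨j, Fin.tail a, Fin.tail k⟩)
  left_inv := by
    rintro (x | ⟨x, q⟩)
    · rfl
    · simp [cons]
  right_inv := by
    rintro ⟨_ | j, a, k⟩
    · simp only [Sum.elim_inl, single]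
      congr <;> funext i <;> rw [Fin.fin_one_eq_zero i]
    · simp [cons, Fin.cons_self_tail]

@[simp]
theorem equivSumCons_inl (x : ℕ × ℤ) : equivSumCons (.inl x) = single x := rfl

@[simp]
theorem equivSumCons_inr (y : (ℕ × ℤ) × Chain) : equivSumCons (.inr y) = cons y.1 y.2 := rfl

def IsAdmissible (N : ℤ) (m : ℕ) (p : Chain) : Prop :=
  (∀ i, 1 ≤ p.2.1 i) ∧ (∑ i, p.2.1 i) = m ∧ p.2.2 0 < N ∧
    ∀ i : Fin p.1, p.2.2 i.succ < p.2.2 i.castSucc - (p.2.1 i.castSucc : ℤ)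

instance (N : ℤ) (m : ℕ) (p : Chain) : Decidable (IsAdmissible N m p) :=
  inferInstanceAs (Decidable (_ ∧ _))

def weight (α : ℤ → ℂ) (p : Chain) : ℂ :=
  ∏ i, α (p.2.2 i) * conj (α (p.2.2 i - (p.2.1 i : ℤ)))

theorem isAdmissible_single_iff {N : ℤ} {m : ℕ} {x : ℕ × ℤ} :
    IsAdmissible N m (single x) ↔ 1 ≤ x.1 ∧ x.1 = m ∧ x.2 < N := by
  dsimp only [IsAdmissible, single]
  simp only [IsEmpty.forall_iff, and_true]
  tauto

theorem isAdmissible_cons_iff {N : ℤ} {m : ℕ} {x : ℕ × ℤ} {q : Chain} :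
    IsAdmissible N m (cons x q) ↔ 1 ≤ x.1 ∧ x.2 < N ∧ IsAdmissible (x.2 - x.1) (m - x.1) q := by
  obtain ⟨a, k⟩ := x
  obtain ⟨j, b, l⟩ := q
  have hpos : (∀ i, 1 ≤ (Fin.cons a b : Fin (j + 2) → ℕ) i) ↔ 1 ≤ a ∧ ∀ i, 1 ≤ b i :=
    Fin.forall_fin_succ.trans (by simp)
  have hgap : (∀ i : Fin (j + 1), (Fin.cons k l : Fin (j + 2) → ℤ) i.succ <
        (Fin.cons k l : Fin (j + 2) → ℤ) i.castSucc -
          ((Fin.cons a b : Fin (j + 2) → ℕ) i.castSucc : ℤ)) ↔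
      l 0 < k - a ∧ ∀ i : Fin j, l i.succ < l i.castSucc - (b i.castSucc : ℤ) :=
    Fin.forall_fin_succ.trans (by simp)
  dsimp only [IsAdmissible, cons]
  simp only [hpos, hgap, Fin.sum_cons, Fin.cons_zero]
  constructor
  · rintro ⟨⟨ha, hb⟩, hs, hk, h0, hg⟩
    exact ⟨ha, hk, hb, by omega, h0, hg⟩
  · rintro ⟨ha, hk, hb, hs, h0, hg⟩
    have := (hb 0).trans (single_le_sum (fun _ _ => Nat.zero_le _) (mem_univ 0))
    exact ⟨⟨ha, hb⟩, by omega, hk, h0, hg⟩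

theorem weight_cons (α : ℤ → ℂ) (x : ℕ × ℤ) (q : Chain) :
    weight α (cons x q) = α x.2 * conj (α (x.2 - x.1)) * weight α q := by
  dsimp only [weight, cons]
  rw [Fin.prod_univ_succ]
  simp only [Fin.cons_zero, Fin.cons_succ]

variable {N : ℤ} {m : ℕ} {p : Chain}

theorem IsAdmissible.node_lt (h : IsAdmissible N m p) (i : Fin (p.1 + 1)) : p.2.2 i < N := by
  induction i using Fin.induction with
  | zero => exact h.2.2.1
  | succ i ih => have := h.2.2.2 i; omega

theorem IsAdmissible.part_le (h : IsAdmissible N m p) (i : Fin (p.1 + 1)) : p.2.1 i ≤ m :=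
  h.2.1 ▸ single_le_sum (fun _ _ => Nat.zero_le _) (mem_univ i)

theorem IsAdmissible.length_lt (h : IsAdmissible N m p) : p.1 < m := by
  have : p.1 + 1 ≤ ∑ i, p.2.1 i := by
    simpa using card_nsmul_le_sum univ p.2.1 1 fun i _ => h.1 i
  have := h.2.1
  omega

theorem IsAdmissible.mono {N' : ℤ} (h : IsAdmissible N m p) (hN : N ≤ N') :
    IsAdmissible N' m p :=
  ⟨h.1, h.2.1, h.2.2.1.trans_le hN, h.2.2.2⟩

noncomputable def box (N : ℤ) (m : ℕ) : Finset Chain :=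
  (range m).sigma fun _ =>
    Fintype.piFinset (fun _ => Icc 1 m) ×ˢ Fintype.piFinset (fun _ => Ico (-1) N)

theorem IsAdmissible.mem_box {α : ℤ → ℂ} (hα : ∀ k ≤ -2, α k = 0) (h : IsAdmissible N m p)
    (hw : weight α p ≠ 0) : p ∈ box N m := by
  have hnode : ∀ i, -1 ≤ p.2.2 i := fun i => by
    by_contra! hi
    exact hw (prod_eq_zero (mem_univ i) (by rw [hα _ (by omega), zero_mul]))
  simp only [box, mem_sigma, mem_range, mem_product, Fintype.mem_piFinset, mem_Icc, mem_Ico]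
  exact ⟨h.length_lt, fun i => ⟨h.1 i, h.part_le i⟩, fun i => ⟨hnode i, h.node_lt i⟩⟩

end Chain

open Chain

noncomputable def chainTerm (α : ℤ → ℂ) (N : ℤ) (m : ℕ) (p : Chain) : ℂ :=
  if IsAdmissible N m p then weight α p else 0

noncomputable def chainSum (α : ℤ → ℂ) (N : ℤ) (m : ℕ) : ℂ := ∑' p, chainTerm α N m p

variable {α : ℤ → ℂ}

theorem summable_chainTerm (hα : ∀ k ≤ -2, α k = 0) (N : ℤ) (m : ℕ) :
    Summable (chainTerm α N m) := by
  refine summable_of_ne_finset_zero (s := box N m) fun p hp => ?_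
  unfold chainTerm
  split_ifs with h
  · by_contra hw
    exact hp (h.mem_box hα hw)
  · rfl

theorem chainSum_of_nonpos (hα : ∀ k ≤ -2, α k = 0) {N : ℤ} (hN : N ≤ 0) (m : ℕ) :
    chainSum α N m = 0 := by
  refine (tsum_congr fun p => ?_).trans tsum_zero
  unfold chainTerm
  split_ifs with h
  · have h0 := h.node_lt 0
    have h1 := h.1 0
    refine prod_eq_zero (mem_univ 0) ?_
    rcases lt_or_ge (p.2.2 0) (-1) with hk | hk
    · rw [hα _ (by omega), zero_mul]
    · rw [hα (p.2.2 0 - p.2.1 0) (by omega), map_zero, mul_zero]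
  · rfl

theorem chainSum_zero_right (N : ℤ) : chainSum α N 0 = 0 := by
  refine (tsum_congr fun p => ?_).trans tsum_zero
  unfold chainTerm
  split_ifs with h
  · have := h.length_lt
    omega
  · rfl

noncomputable def headTerm (α : ℤ → ℂ) (N : ℤ) (m : ℕ) (p : Chain) : ℂ :=
  if p.2.2 0 = N then chainTerm α (N + 1) m p else 0

theorem headTerm_eq_sub (N : ℤ) (m : ℕ) (p : Chain) :
    headTerm α N m p = chainTerm α (N + 1) m p - chainTerm α N m p := by
  by_cases hN : p.2.2 0 = N
  · have : ¬IsAdmissible N m p := fun h => (h.node_lt 0).ne hN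
    simp [headTerm, chainTerm, hN, this]
  · by_cases h : IsAdmissible (N + 1) m p
    · have : IsAdmissible N m p := ⟨h.1, h.2.1, by have := h.node_lt 0; omega, h.2.2.2⟩
      simp [headTerm, chainTerm, hN, h, this]
    · have : ¬IsAdmissible N m p := fun h' => h (h'.mono (by omega))
      simp [headTerm, chainTerm, hN, h, this]

theorem headTerm_single {N : ℤ} {m : ℕ} (hm : 1 ≤ m) (x : ℕ × ℤ) :
    headTerm α N m (single x) = if x = (m, N) then α N * conj (α (N - m)) else 0 := by
  have hw : weight α (single x) = α x.2 * conj (α (x.2 - x.1)) := Fin.prod_univ_one _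
  by_cases hx : x = (m, N)
  · subst hx
    simp [headTerm, chainTerm, isAdmissible_single_iff, hw, hm]
  · have : ¬(x.2 = N ∧ 1 ≤ x.1 ∧ x.1 = m ∧ x.2 < N + 1) := fun h => hx (Prod.ext h.2.2.1 h.1)
    simp only [headTerm, chainTerm, isAdmissible_single_iff, hw, hx, if_false]
    split_ifs <;> tauto

theorem headTerm_cons (N : ℤ) (m : ℕ) (x : ℕ × ℤ) (q : Chain) :
    headTerm α N m (cons x q) =
      if x.2 = N ∧ 1 ≤ x.1 then α N * conj (α (N - x.1)) * chainTerm α (N - x.1) (m - x.1) q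
      else 0 := by
  obtain ⟨a, k⟩ := x
  by_cases hk : k = N
  · subst hk
    by_cases ha : 1 ≤ a <;> by_cases hq : IsAdmissible (k - a) (m - a) q <;>
      simp [headTerm, chainTerm, isAdmissible_cons_iff, weight_cons, ha, hq]
  · simp [headTerm, hk]

theorem tsum_headTerm_cons (N : ℤ) (m : ℕ) (x : ℕ × ℤ) :
    ∑' q, headTerm α N m (cons x q) =
      if x.2 = N ∧ 1 ≤ x.1 then α N * conj (α (N - x.1)) * chainSum α (N - x.1) (m - x.1)
      else 0 := by
  simp only [headTerm_cons]
  split_ifs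
  · exact tsum_mul_left
  · exact tsum_zero

theorem summable_headTerm (hα : ∀ k ≤ -2, α k = 0) (N : ℤ) (m : ℕ) :
    Summable (headTerm α N m) :=
  ((summable_chainTerm hα (N + 1) m).sub (summable_chainTerm hα N m)).congr
    fun p => (headTerm_eq_sub N m p).symm

theorem tsum_headTerm (hα : ∀ k ≤ -2, α k = 0) (N : ℤ) {m : ℕ} (hm : 1 ≤ m) :
    ∑' p, headTerm α N m p = α N * (conj (α (N - m)) +
      ∑ a ∈ Ico 1 m, conj (α (N - a)) * chainSum α (N - a) (m - a)) := by
  have hs : Summable (headTerm α N m ∘ equivSumCons) :=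
    equivSumCons.summable_iff.mpr (summable_headTerm hα N m)
  have hs_cons : Summable fun y : (ℕ × ℤ) × Chain => headTerm α N m (cons y.1 y.2) := by
    simpa only [Function.comp_def, equivSumCons_inr] using hs.comp_injective Sum.inr_injective
  have hvanish : ∀ x ∉ Ico 1 m ×ˢ {N}, ∑' q, headTerm α N m (cons x q) = 0 := by
    intro x hx
    rw [tsum_headTerm_cons]
    split_ifs with hx'
    · have : m ≤ x.1 := not_lt.1 fun h =>
        hx (mem_product.2 ⟨mem_Ico.2 ⟨hx'.2, h⟩, mem_singleton.2 hx'.1⟩)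
      rw [Nat.sub_eq_zero_of_le this, chainSum_zero_right, mul_zero]
    · rfl
  rw [← equivSumCons.tsum_eq]
  change ∑' c, (headTerm α N m ∘ equivSumCons) c = _
  rw [Summable.tsum_sum (hs.comp_injective Sum.inl_injective)
    (hs.comp_injective Sum.inr_injective)]
  simp only [Function.comp_apply, equivSumCons_inl, equivSumCons_inr, headTerm_single hm,
    tsum_ite_eq]
  rw [hs_cons.tsum_prod, tsum_eq_sum hvanish, sum_product, mul_add, mul_sum]
  congr 1
  refine sum_congr rfl fun a ha => ?_
  rw [sum_singleton, tsum_headTerm_cons, if_pos ⟨rfl, (mem_Ico.1 ha).1⟩, mul_assoc]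

theorem chainSum_succ_sub (hα : ∀ k ≤ -2, α k = 0) (N : ℤ) {m : ℕ} (hm : 1 ≤ m) :
    chainSum α (N + 1) m - chainSum α N m = α N * (conj (α (N - m)) +
      ∑ a ∈ Ico 1 m, conj (α (N - a)) * chainSum α (N - a) (m - a)) := by
  rw [chainSum, chainSum, ← (summable_chainTerm hα (N + 1) m).tsum_sub (summable_chainTerm hα N m),
    ← tsum_headTerm hα N hm]
  exact tsum_congr fun p => (headTerm_eq_sub N m p).symm

noncomputable def lambdaCoeff (α : ℤ → ℂ) (N : ℤ) (m : ℕ) : ℂ :=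
  if m = 0 then 1 else chainSum α N m

/-- The coefficient of `z^k` in `Φ_N`: unrolling the recursion for `Φ` gives
`Φ_N = -∑_b conj(α_{N-1-b}) z^b Φ*_{N-1-b}`, and `α_{-1} = -1` supplies the leading term. -/
noncomputable def phiCoeff (α : ℤ → ℂ) (N : ℤ) (k : ℕ) : ℂ :=
  -∑ b ∈ range (k + 1), conj (α (N - 1 - b)) * lambdaCoeff α (N - 1 - b) (k - b)

@[simp]
theorem lambdaCoeff_zero_right (N : ℤ) : lambdaCoeff α N 0 = 1 := if_pos rfl

theorem lambdaCoeff_of_nonpos (hα : ∀ k ≤ -2, α k = 0) {N : ℤ} (hN : N ≤ 0) (m : ℕ) :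
    lambdaCoeff α N m = (1 : ℂ[X]).coeff m := by
  rw [lambdaCoeff, coeff_one, chainSum_of_nonpos hα hN]

theorem lambdaCoeff_succ_succ (hα : ∀ k ≤ -2, α k = 0) (N : ℤ) (k : ℕ) :
    lambdaCoeff α (N + 1) (k + 1) = lambdaCoeff α N (k + 1) - α N * phiCoeff α N k := by
  have hsum : ∑ a ∈ Ico 1 (k + 1), conj (α (N - a)) * chainSum α (N - a) (k + 1 - a) =
      ∑ b ∈ range k, conj (α (N - 1 - b)) * lambdaCoeff α (N - 1 - b) (k - b) := by
    rw [sum_Ico_eq_sum_range, Nat.add_sub_cancel]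
    refine sum_congr rfl fun b hb => ?_
    rw [lambdaCoeff, if_neg (by simp at hb; omega), show k + 1 - (1 + b) = k - b by omega,
      show N - ((1 + b : ℕ) : ℤ) = N - 1 - b by push_cast; ring]
  have key := chainSum_succ_sub hα N k.succ_pos
  rw [lambdaCoeff, if_neg k.succ_ne_zero, lambdaCoeff, if_neg k.succ_ne_zero, phiCoeff,
    sum_range_succ, Nat.sub_self, lambdaCoeff_zero_right, ← hsum]
  rw [show N - ((k + 1 : ℕ) : ℤ) = N - 1 - k by push_cast; ring] at key
  linear_combination key

theorem phiCoeff_zero_left (hα1 : α (-1) = -1) (hα : ∀ k ≤ -2, α k = 0) (k : ℕ) :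
    phiCoeff α 0 k = (1 : ℂ[X]).coeff k := by
  rw [phiCoeff, sum_range_succ', sum_eq_zero fun b _ => ?_]
  · simp [hα1, lambdaCoeff_of_nonpos hα]
  · rw [hα _ (by omega), map_zero, zero_mul]

theorem phiCoeff_succ_zero (N : ℤ) : phiCoeff α (N + 1) 0 = -conj (α N) := by
  simp [phiCoeff]

theorem phiCoeff_succ_succ (N : ℤ) (k : ℕ) :
    phiCoeff α (N + 1) (k + 1) = phiCoeff α N k - conj (α N) * lambdaCoeff α N (k + 1) := by
  have hshift : ∀ b : ℕ, N - ((b + 1 : ℕ) : ℤ) = N - 1 - b := fun b => by push_cast; ring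
  rw [phiCoeff, sum_range_succ', phiCoeff]
  simp only [add_sub_cancel_right, hshift, Nat.add_sub_add_right, Nat.cast_zero, sub_zero,
    Nat.sub_zero]
  ring

theorem coeff_eq_of_szego_recursion (hα1 : α (-1) = -1) (hα : ∀ k ≤ -2, α k = 0)
    {Φ Ψ : ℕ → ℂ[X]} (h0 : Φ 0 = 1) (h0' : Ψ 0 = 1)
    (hrec : ∀ n : ℕ, Φ (n + 1) = X * Φ n - C (conj (α n)) * Ψ n)
    (hrec' : ∀ n : ℕ, Ψ (n + 1) = Ψ n - C (α n) * X * Φ n) (n : ℕ) :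
    (Ψ n).coeff = lambdaCoeff α n ∧ (Φ n).coeff = phiCoeff α n := by
  induction n with
  | zero =>
    refine ⟨funext fun m => ?_, funext fun k => ?_⟩
    · rw [h0', Nat.cast_zero, lambdaCoeff_of_nonpos hα le_rfl]
    · rw [h0, Nat.cast_zero, phiCoeff_zero_left hα1 hα]
  | succ n ih =>
    obtain ⟨hΨ, hΦ⟩ := ih
    refine ⟨funext fun m => ?_, funext fun k => ?_⟩
    · rw [hrec', mul_assoc, coeff_sub, coeff_C_mul, Nat.cast_succ, hΨ]
      rcases m with _ | m
      · simp
      · rw [coeff_X_mul, hΦ, lambdaCoeff_succ_succ hα]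
    · rw [hrec, coeff_sub, coeff_C_mul, Nat.cast_succ, hΨ]
      rcases k with _ | k
      · simp [phiCoeff_succ_zero]
      · rw [coeff_X_mul, hΦ, phiCoeff_succ_succ]

end OPUC

theorem lambda_formula_general (α : ℤ → ℂ)
    (hm1 : α (-1) = -1) (hm2 : ∀ k : ℤ, k ≤ -2 → α k = 0)
    (Φ Ψ : ℕ → Polynomial ℂ) (h0 : Φ 0 = 1) (h0' : Ψ 0 = 1)
    (hrec : ∀ n : ℕ, Φ (n + 1) = X * Φ n - C ((starRingEnd ℂ) (α n)) * Ψ n)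
    (hrec' : ∀ n : ℕ, Ψ (n + 1) = Ψ n - C (α n) * X * Φ n) :
    ∀ (n : ℕ) (m : ℕ), 1 ≤ m →
      (Ψ n).coeff m =
        ∑' p : Σ j : ℕ, (Fin (j + 1) → ℕ) × (Fin (j + 1) → ℤ),
          if (∀ i, 1 ≤ p.2.1 i) ∧ (∑ i, p.2.1 i) = m ∧ p.2.2 0 < (n : ℤ) ∧
              (∀ i : Fin p.1, p.2.2 i.succ < p.2.2 i.castSucc - (p.2.1 i.castSucc : ℤ))
          then ∏ i, α (p.2.2 i) * (starRingEnd ℂ) (α (p.2.2 i - (p.2.1 i : ℤ)))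
          else 0 := by
  intro n m hm
  rw [(OPUC.coeff_eq_of_szego_recursion hm1 hm2 h0 h0' hrec hrec' n).1, OPUC.lambdaCoeff,
    if_neg (by omega)]
  rfl

/-- Theorem 1.1: for `m ≥ 1`, the coefficient `λ_{n,m}` of `z^m` in `Φ_n^*` equals the
sum, over ordered compositions `(a_1,…,a_j)` of `m` into positive parts and integer
tuples `k_1 < n`, `k_{i+1} < k_i - a_i`, of
`α_{k_1} conj(α_{k_1-a_1}) ⋯ α_{k_j} conj(α_{k_j-a_j})`, with the conventions
`α_{-1} = -1` and `α_k = 0` for `k ≤ -2`.  The sum is expressed as a `tsum` over the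
countable index type of tuples (only finitely many terms are nonzero). -/
theorem lambda_formula (α : ℤ → ℂ) (hα : ∀ n : ℤ, 0 ≤ n → ‖α n‖ < 1)
    (hm1 : α (-1) = -1) (hm2 : ∀ k : ℤ, k ≤ -2 → α k = 0)
    (Φ Ψ : ℕ → Polynomial ℂ) (h0 : Φ 0 = 1) (h0' : Ψ 0 = 1)
    (hrec : ∀ n : ℕ, Φ (n + 1) = X * Φ n - C ((starRingEnd ℂ) (α n)) * Ψ n)
    (hrec' : ∀ n : ℕ, Ψ (n + 1) = Ψ n - C (α n) * X * Φ n) :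
    ∀ (n : ℕ) (m : ℕ), 1 ≤ m →
      (Ψ n).coeff m =
        ∑' p : Σ j : ℕ, (Fin (j + 1) → ℕ) × (Fin (j + 1) → ℤ),
          if (∀ i, 1 ≤ p.2.1 i) ∧ (∑ i, p.2.1 i) = m ∧ p.2.2 0 < (n : ℤ) ∧
              (∀ i : Fin p.1, p.2.2 i.succ < p.2.2 i.castSucc - (p.2.1 i.castSucc : ℤ))
          then ∏ i, α (p.2.2 i) * (starRingEnd ℂ) (α (p.2.2 i - (p.2.1 i : ℤ)))
          else 0 :=
  lambda_formula_general α hm1 hm2 Φ Ψ h0 h0' hrec hrec'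
end

section
/- Suppose ∑_k |α_k|^2 < ∞. For each m ≥ 1, the m-fold sum d_m = ∑ over ordered compositions (a_1,…,a_j) of m and integer tuples k_2 < k_1 − a_1, …, k_j < k_{j−1} − a_{j−1} (with k_1 ranging over all of ℤ) of α_{k_1}conj(α_{k_1−a_1})⋯α_{k_j}conj(α_{k_j−a_j}) converges absolutely, with |d_m| ≤ ∑_{compositions (a_1,…,a_j) of m} ∏_{l=1}^{j} (∑_k |α_k||α_{k−a_l}|). -/
/-!
Dropping the ordering constraints `k_{l+1} < k_l - a_l` only enlarges the series of absolute
values. The enlarged series splits, for each composition `(a_1, …, a_j)`, into the product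
`∏_l ∑_k ‖α_k‖ ‖α_{k - a_l}‖`, whose factors are finite since `‖α_k‖ ‖α_{k-a}‖` is dominated
by `(‖α_k‖² + ‖α_{k-a}‖²) / 2`. As `m` has finitely many compositions, the enlarged series
converges, and its sum is the right-hand side.
-/

theorem summable_mul_of_summable_sq {ι : Type*} {u v : ι → ℝ} (hu : Summable fun i => u i ^ 2)
    (hv : Summable fun i => v i ^ 2) : Summable fun i => u i * v i :=
  ((hu.add hv).div_const 2).of_norm_bounded fun i => by
    rw [Real.norm_eq_abs, abs_mul]
    nlinarith [two_mul_le_add_sq |u i| |v i|, sq_abs (u i), sq_abs (v i)]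

theorem hasSum_sigma_of_nonneg {β : Type*} {γ : β → Type*} {f : (Σ b, γ b) → ℝ} {g : β → ℝ}
    {a : ℝ} (hf : 0 ≤ f) (hfg : ∀ b, HasSum (fun c => f ⟨b, c⟩) (g b)) (hg : HasSum g a) :
    HasSum f a := by
  have hs : Summable f := (summable_sigma_of_nonneg hf).2
    ⟨fun b => (hfg b).summable, by simpa only [fun b => (hfg b).tsum_eq] using hg.summable⟩
  exact (hs.hasSum.sigma hfg).unique hg ▸ hs.hasSum

theorem hasSum_sigma_prod_of_nonneg {ι : Type*} {A B : ι → Type*} {f : (Σ j, A j × B j) → ℝ}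
    {g : (Σ j, A j) → ℝ} {s : ℝ} (hf : 0 ≤ f)
    (hfg : ∀ j a, HasSum (fun b => f ⟨j, a, b⟩) (g ⟨j, a⟩)) (hg : HasSum g s) : HasSum f s := by
  rw [← ((Equiv.sigmaAssoc fun j (_ : A j) => B j).trans
    (Equiv.sigmaCongrRight fun j => Equiv.sigmaEquivProd (A j) (B j))).hasSum_iff]
  exact hasSum_sigma_of_nonneg (fun _ => hf _) (fun x => hfg x.1 x.2) hg

theorem hasSum_pi_prod_of_nonneg {ι : Type*} {n : ℕ} {g : Fin n → ι → ℝ} {s : Fin n → ℝ}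
    (hg : ∀ i, 0 ≤ g i) (hs : ∀ i, HasSum (g i) (s i)) :
    HasSum (fun k : Fin n → ι => ∏ i, g i (k i)) (∏ i, s i) := by
  induction n with
  | zero => simp
  | succ n ih =>
    have htail : HasSum (fun k : Fin n → ι => ∏ i, g i.succ (k i)) (∏ i : Fin n, s i.succ) :=
      ih (fun i => hg i.succ) (fun i => hs i.succ)
    have htail_nonneg : 0 ≤ fun k : Fin n → ι => ∏ i, g i.succ (k i) :=
      fun _ => Finset.prod_nonneg fun i _ => hg i.succ _
    have hsummable := (hs 0).summable.mul_of_nonneg htail.summable (hg 0) htail_nonneg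
    have hprod := HasSum.mul (hs 0) htail hsummable
    rw [← (Fin.consEquiv fun _ => ι).hasSum_iff, Fin.prod_univ_succ]
    simpa only [Function.comp_def, Fin.consEquiv_apply, Fin.prod_univ_succ, Fin.cons_zero,
      Fin.cons_succ] using hprod

theorem finite_setOf_compositions (m : ℕ) :
    {c : Σ j : ℕ, Fin (j + 1) → ℕ | (∀ i, 1 ≤ c.2 i) ∧ ∑ i, c.2 i = m}.Finite := by
  refine ((Finset.range m).sigma fun _ => Fintype.piFinset fun _ => Finset.range (m + 1))
    |>.finite_toSet.subset ?_
  rintro ⟨j, a⟩ ⟨hpos, hsum⟩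
  have hle : ∀ i, a i ≤ m := fun i => hsum ▸ Finset.single_le_sum (by simp) (Finset.mem_univ i)
  have hlen : ∑ _i : Fin (j + 1), 1 ≤ m := hsum ▸ Finset.sum_le_sum fun i _ => hpos i
  simp only [Finset.sum_const, Finset.card_univ, Fintype.card_fin, smul_eq_mul, mul_one] at hlen
  simp only [Finset.coe_sigma, Set.mem_sigma_iff, Finset.coe_range, Set.mem_Iio,
    Fintype.coe_piFinset, Set.mem_pi, Set.mem_univ, forall_const]
  exact ⟨by omega, fun i => Nat.lt_succ_of_le (hle i)⟩

noncomputable def dmTerm (α : ℤ → ℂ) (m : ℕ) (p : Σ j : ℕ, (Fin (j + 1) → ℕ) × (Fin (j + 1) → ℤ)) : ℂ :=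
  if (∀ i, 1 ≤ p.2.1 i) ∧ (∑ i, p.2.1 i) = m ∧
      (∀ i : Fin p.1, p.2.2 i.succ < p.2.2 i.castSucc - (p.2.1 i.castSucc : ℤ))
  then ∏ i, α (p.2.2 i) * (starRingEnd ℂ) (α (p.2.2 i - (p.2.1 i : ℤ)))
  else 0

noncomputable def dmMajorant (α : ℤ → ℂ) (m : ℕ) (p : Σ j : ℕ, (Fin (j + 1) → ℕ) × (Fin (j + 1) → ℤ)) : ℝ :=
  if (∀ i, 1 ≤ p.2.1 i) ∧ (∑ i, p.2.1 i) = m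
  then ∏ i, ‖α (p.2.2 i)‖ * ‖α (p.2.2 i - (p.2.1 i : ℤ))‖
  else 0

noncomputable def compositionWeight (α : ℤ → ℂ) (m : ℕ) (c : Σ j : ℕ, Fin (j + 1) → ℕ) : ℝ :=
  if (∀ i, 1 ≤ c.2 i) ∧ (∑ i, c.2 i) = m
  then ∏ i, ∑' k : ℤ, ‖α k‖ * ‖α (k - (c.2 i : ℤ))‖
  else 0

theorem dmMajorant_nonneg (α : ℤ → ℂ) (m : ℕ) : 0 ≤ dmMajorant α m := fun p => by
  unfold dmMajorant
  split_ifs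
  · exact Finset.prod_nonneg fun i _ => by positivity
  · exact le_rfl

theorem norm_dmTerm_le_dmMajorant (α : ℤ → ℂ) (m : ℕ) :
    ∀ p, ‖dmTerm α m p‖ ≤ dmMajorant α m p := fun p => by
  unfold dmTerm
  split_ifs with h
  · rw [dmMajorant, if_pos ⟨h.1, h.2.1⟩, norm_prod]
    simp only [norm_mul, RCLike.norm_conj, le_rfl]
  · rw [norm_zero]
    exact dmMajorant_nonneg α m p

theorem summable_compositionWeight (α : ℤ → ℂ) (m : ℕ) : Summable (compositionWeight α m) :=
  summable_of_hasFiniteSupport <| (finite_setOf_compositions m).subset fun c hc => by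
    by_contra h
    exact hc (if_neg h)

theorem hasSum_dmMajorant {α : ℤ → ℂ} (hα : Summable fun k => ‖α k‖ ^ 2) (m : ℕ) :
    HasSum (dmMajorant α m) (∑' c, compositionWeight α m c) := by
  refine hasSum_sigma_prod_of_nonneg (A := fun j => Fin (j + 1) → ℕ)
    (B := fun j => Fin (j + 1) → ℤ) (dmMajorant_nonneg α m) (fun j a => ?_)
    (summable_compositionWeight α m).hasSum
  unfold dmMajorant compositionWeight
  split_ifs
  · refine hasSum_pi_prod_of_nonneg (g := fun i k => ‖α k‖ * ‖α (k - a i)‖)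
      (fun i k => by positivity) fun i => Summable.hasSum ?_
    exact summable_mul_of_summable_sq hα (hα.comp_injective (sub_left_injective (b := (a i : ℤ))))
  · exact hasSum_zero

theorem dm_summable_and_bound_general (α : ℤ → ℂ)
    (hsum : Summable fun k : ℤ => ‖α k‖ ^ 2) (m : ℕ) :
    (Summable fun p : Σ j : ℕ, (Fin (j + 1) → ℕ) × (Fin (j + 1) → ℤ) =>
      ‖if (∀ i, 1 ≤ p.2.1 i) ∧ (∑ i, p.2.1 i) = m ∧
            (∀ i : Fin p.1, p.2.2 i.succ < p.2.2 i.castSucc - (p.2.1 i.castSucc : ℤ))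
        then ∏ i, α (p.2.2 i) * (starRingEnd ℂ) (α (p.2.2 i - (p.2.1 i : ℤ)))
        else 0‖)
    ∧
    ‖∑' p : Σ j : ℕ, (Fin (j + 1) → ℕ) × (Fin (j + 1) → ℤ),
        if (∀ i, 1 ≤ p.2.1 i) ∧ (∑ i, p.2.1 i) = m ∧
            (∀ i : Fin p.1, p.2.2 i.succ < p.2.2 i.castSucc - (p.2.1 i.castSucc : ℤ))
        then ∏ i, α (p.2.2 i) * (starRingEnd ℂ) (α (p.2.2 i - (p.2.1 i : ℤ)))
        else 0‖
      ≤ ∑' c : Σ j : ℕ, Fin (j + 1) → ℕ,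
          if (∀ i, 1 ≤ c.2 i) ∧ (∑ i, c.2 i) = m
          then ∏ i, ∑' k : ℤ, ‖α k‖ * ‖α (k - (c.2 i : ℤ))‖
          else 0 := by
  change Summable (fun p => ‖dmTerm α m p‖) ∧
    ‖∑' p, dmTerm α m p‖ ≤ ∑' c, compositionWeight α m c
  have hmajorant := hasSum_dmMajorant hsum m
  have hnorm : Summable fun p => ‖dmTerm α m p‖ :=
    hmajorant.summable.of_nonneg_of_le (fun _ => norm_nonneg _) (norm_dmTerm_le_dmMajorant α m)
  refine ⟨hnorm, ?_⟩
  calc ‖∑' p, dmTerm α m p‖ ≤ ∑' p, ‖dmTerm α m p‖ := norm_tsum_le_tsum_norm hnorm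
    _ ≤ ∑' c, compositionWeight α m c :=
      hasSum_le (norm_dmTerm_le_dmMajorant α m) hnorm.hasSum hmajorant

/-- If the extended Verblunsky coefficients are square-summable, then for each `m ≥ 1`
the multiple series defining `d_m` (over ordered compositions `(a_1,…,a_j)` of `m` and
integer tuples `k_2 < k_1 - a_1, …, k_j < k_{j-1} - a_{j-1}` with `k_1 ∈ ℤ` free)
converges absolutely, and
`|d_m| ≤ ∑_{compositions (a_1,…,a_j) of m} ∏_{l=1}^{j} (∑_k ‖α_k‖‖α_{k-a_l}‖)`. -/
theorem dm_summable_and_bound (α : ℤ → ℂ) (hα : ∀ n : ℤ, 0 ≤ n → ‖α n‖ < 1)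
    (hm1 : α (-1) = -1) (hm2 : ∀ k : ℤ, k ≤ -2 → α k = 0)
    (hsum : Summable fun k : ℤ => ‖α k‖ ^ 2) (m : ℕ) (hm : 1 ≤ m) :
    (Summable fun p : Σ j : ℕ, (Fin (j + 1) → ℕ) × (Fin (j + 1) → ℤ) =>
      ‖if (∀ i, 1 ≤ p.2.1 i) ∧ (∑ i, p.2.1 i) = m ∧
            (∀ i : Fin p.1, p.2.2 i.succ < p.2.2 i.castSucc - (p.2.1 i.castSucc : ℤ))
        then ∏ i, α (p.2.2 i) * (starRingEnd ℂ) (α (p.2.2 i - (p.2.1 i : ℤ)))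
        else 0‖)
    ∧
    ‖∑' p : Σ j : ℕ, (Fin (j + 1) → ℕ) × (Fin (j + 1) → ℤ),
        if (∀ i, 1 ≤ p.2.1 i) ∧ (∑ i, p.2.1 i) = m ∧
            (∀ i : Fin p.1, p.2.2 i.succ < p.2.2 i.castSucc - (p.2.1 i.castSucc : ℤ))
        then ∏ i, α (p.2.2 i) * (starRingEnd ℂ) (α (p.2.2 i - (p.2.1 i : ℤ)))
        else 0‖
      ≤ ∑' c : Σ j : ℕ, Fin (j + 1) → ℕ,
          if (∀ i, 1 ≤ c.2 i) ∧ (∑ i, c.2 i) = m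
          then ∏ i, ∑' k : ℤ, ‖α k‖ * ‖α (k - (c.2 i : ℤ))‖
          else 0 :=
  dm_summable_and_bound_general α hsum m
end

section
/- Let M be the number of ways to write a multiset P = {Q_1,…,Q_q, R_1,…,R_r} of q + r distinct nonempty sets into an ordered tuple of blocks, where each block is either a single Q, a single R, or a union Q_u ∪ R_v of one Q with one R, and each Q and R is used exactly once. Then ∑_{s=0}^{min(q,r)} ((-1)^{q+r-s}/(q+r-s)) · (number of such tuples with exactly s merged pairs) = 0 when q, r ≥ 1; explicitly, the number of tuples with s merged pairs is C(q,s)·C(r,s)·s!·(q+r−s)!. -/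
/-!
There are `(q + r - s)!` orderings of the blocks of each matching of size `s`, and a matching is
the graph of an injection from an `s`-subset of the `Q`'s into the `R`'s, so there are
`C(q,s) · r!/(r-s)!` matchings.

After division by `q + r - s`, the `s`-th term of the signed sum is
`(-1)^(q+r) (q-1)! r! · (-1)^s C(q,s) C(q+r-1-s, q-1)`, and
`∑_s (-1)^s C(q,s) C(q+r-1-s, q-1)` is the `q`-th forward difference at `r - 1` of
`n ↦ C(n, q-1)`, a polynomial of degree `q - 1`, so it vanishes.
-/

/-- A matching of `s` of the `Q`'s (indexed by `Fin q`) with `s` of the `R`'s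
(indexed by `Fin r`): a set of pairs with distinct first and distinct second
coordinates. -/
def SzegoMatching (q r s : ℕ) : Type :=
  { M : Finset (Fin q × Fin r) // M.card = s ∧
      ∀ p ∈ M, ∀ p' ∈ M, (p.1 = p'.1 ∨ p.2 = p'.2) → p = p' }

/-- The blocks determined by a matching: unmatched `Q`'s, unmatched `R`'s, and
merged pairs `Q_u ∪ R_v`. -/
def SzegoBlocks {q r s : ℕ} (M : SzegoMatching q r s) : Type :=
  { u : Fin q // ∀ v, (u, v) ∉ M.1 } ⊕ { v : Fin r // ∀ u, (u, v) ∉ M.1 } ⊕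
    { p : Fin q × Fin r // p ∈ M.1 }

/-- A configuration with exactly `s` merged pairs: a matching together with a
linear ordering of the resulting `q + r − s` blocks. -/
def SzegoConfig (q r s : ℕ) : Type :=
  Σ M : SzegoMatching q r s, Fin (q + r - s) ≃ SzegoBlocks M

open Finset fwdDiff
open scoped Nat

def PairMatching (α β : Type*) (s : ℕ) : Type _ :=
  { M : Finset (α × β) // #M = s ∧
      ∀ p ∈ M, ∀ p' ∈ M, (p.1 = p'.1 ∨ p.2 = p'.2) → p = p' }

section Matching

variable {α β : Type*}

lemma PairMatching.injOn_fst {s : ℕ} (M : PairMatching α β s) :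
    Set.InjOn Prod.fst (M.1 : Set (α × β)) :=
  fun p hp p' hp' h => M.2.2 p hp p' hp' (.inl h)

lemma PairMatching.injOn_snd {s : ℕ} (M : PairMatching α β s) :
    Set.InjOn Prod.snd (M.1 : Set (α × β)) :=
  fun p hp p' hp' h => M.2.2 p hp p' hp' (.inr h)

variable [DecidableEq α] [DecidableEq β]

def embeddingGraph (A : Finset α) (f : A ↪ β) : Finset (α × β) :=
  A.attach.image fun x => (x.1, f x)

lemma mem_embeddingGraph {A : Finset α} {f : A ↪ β} {a : α} {b : β} :
    (a, b) ∈ embeddingGraph A f ↔ ∃ h : a ∈ A, f ⟨a, h⟩ = b := by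
  simp only [embeddingGraph, mem_image, mem_attach, true_and, Prod.mk.injEq, Subtype.exists]
  constructor
  · rintro ⟨a, ha, rfl, rfl⟩
    exact ⟨ha, rfl⟩
  · rintro ⟨ha, h⟩
    exact ⟨a, ha, rfl, h⟩

lemma image_fst_embeddingGraph (A : Finset α) (f : A ↪ β) :
    (embeddingGraph A f).image Prod.fst = A := by
  ext a
  simp [embeddingGraph]

lemma card_embeddingGraph (A : Finset α) (f : A ↪ β) : #(embeddingGraph A f) = #A := by
  rw [embeddingGraph, card_image_of_injective _ fun x y h => f.injective (congrArg Prod.snd h),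
    card_attach]

lemma exists_embeddingGraph_eq {M : Finset (α × β)}
    (hfst : Set.InjOn Prod.fst (M : Set (α × β)))
    (hsnd : Set.InjOn Prod.snd (M : Set (α × β))) :
    ∃ f : M.image Prod.fst ↪ β, embeddingGraph _ f = M := by
  choose p hpM hp using fun x : M.image Prod.fst => mem_image.1 x.2
  refine ⟨⟨fun x => (p x).2, fun x y hxy => ?_⟩, ?_⟩
  · exact Subtype.ext <| by rw [← hp x, ← hp y, hsnd (hpM x) (hpM y) hxy]
  · ext ⟨a, b⟩
    rw [mem_embeddingGraph]
    constructor
    · rintro ⟨ha, rfl⟩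
      convert hpM ⟨a, ha⟩ using 1
      exact Prod.ext (hp ⟨a, ha⟩).symm rfl
    · intro hab
      have ha : a ∈ M.image Prod.fst := mem_image_of_mem Prod.fst hab
      exact ⟨ha, congrArg Prod.snd (hfst (hpM ⟨a, ha⟩) hab (hp _))⟩

def graphMatching (s : ℕ) (Af : Σ A : {A : Finset α // #A = s}, (A.1 ↪ β)) :
    PairMatching α β s :=
  ⟨embeddingGraph Af.1.1 Af.2, by rw [card_embeddingGraph, Af.1.2], by
    rintro ⟨a, b⟩ hab ⟨a', b'⟩ hab' h
    obtain ⟨ha, rfl⟩ := mem_embeddingGraph.1 hab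
    obtain ⟨ha', rfl⟩ := mem_embeddingGraph.1 hab'
    rcases h with h | h
    · subst h; rfl
    · cases Af.2.injective h; rfl⟩

lemma graphMatching_injective (s : ℕ) :
    Function.Injective (graphMatching (α := α) (β := β) s) := by
  rintro ⟨⟨A, hA⟩, f⟩ ⟨⟨B, hB⟩, g⟩ h
  have hgraph : embeddingGraph A f = embeddingGraph B g := congrArg Subtype.val h
  obtain rfl : A = B := by rw [← image_fst_embeddingGraph A f, hgraph, image_fst_embeddingGraph]
  obtain rfl : f = g := by
    ext ⟨a, ha⟩
    have hmem : (a, f ⟨a, ha⟩) ∈ embeddingGraph A g :=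
      hgraph ▸ mem_embeddingGraph.2 ⟨ha, rfl⟩
    obtain ⟨_, hg⟩ := mem_embeddingGraph.1 hmem
    exact hg.symm
  rfl

lemma graphMatching_surjective (s : ℕ) :
    Function.Surjective (graphMatching (α := α) (β := β) s) := by
  intro M
  obtain ⟨f, hf⟩ := exists_embeddingGraph_eq M.injOn_fst M.injOn_snd
  exact ⟨⟨⟨M.1.image Prod.fst, by rw [card_image_of_injOn M.injOn_fst, M.2.1]⟩, f⟩,
    Subtype.ext hf⟩

lemma card_pairMatching [Fintype α] [Fintype β] (s : ℕ) :
    Nat.card (PairMatching α β s) =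
      (Fintype.card α).choose s * (Fintype.card β).descFactorial s := by
  rw [← Nat.card_eq_of_bijective _ ⟨graphMatching_injective s, graphMatching_surjective s⟩,
    Nat.card_sigma]
  have hfiber (A : {A : Finset α // #A = s}) :
      Nat.card (A.1 ↪ β) = (Fintype.card β).descFactorial s := by
    rw [Nat.card_eq_fintype_card, Fintype.card_embedding_eq, Fintype.card_coe, A.2]
  simp only [hfiber, sum_const, card_univ, Fintype.card_finset_len, smul_eq_mul]

end Matching

section Unmatched

variable {α β γ : Type*}

lemma card_notMem_image_add_card [Fintype α] [DecidableEq α] {f : γ → α} {M : Finset γ}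
    (hf : Set.InjOn f M) : Nat.card {a // a ∉ M.image f} + #M = Fintype.card α := by
  rw [Nat.card_eq_fintype_card, Fintype.card_subtype_compl, Fintype.card_coe,
    ← card_image_of_injOn hf]
  have := card_le_univ (M.image f)
  omega

lemma card_unmatched_fst_add_card [Fintype α] [DecidableEq α] {M : Finset (α × β)}
    (hM : Set.InjOn Prod.fst (M : Set (α × β))) :
    Nat.card {a // ∀ b, (a, b) ∉ M} + #M = Fintype.card α := by
  rw [← card_notMem_image_add_card hM, Nat.card_congr (Equiv.subtypeEquivRight fun a => ?_)]
  simp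

lemma card_unmatched_snd_add_card [Fintype β] [DecidableEq β] {M : Finset (α × β)}
    (hM : Set.InjOn Prod.snd (M : Set (α × β))) :
    Nat.card {b // ∀ a, (a, b) ∉ M} + #M = Fintype.card β := by
  rw [← card_notMem_image_add_card hM, Nat.card_congr (Equiv.subtypeEquivRight fun b => ?_)]
  simp

end Unmatched

section Szego

variable {q r s : ℕ}

instance (M : SzegoMatching q r s) : Finite (SzegoBlocks M) := by
  unfold SzegoBlocks; infer_instance

lemma card_szegoBlocks (M : SzegoMatching q r s) : Nat.card (SzegoBlocks M) = q + r - s := by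
  have hQ := card_unmatched_fst_add_card (PairMatching.injOn_fst (α := Fin q) (β := Fin r) M)
  have hR := card_unmatched_snd_add_card (PairMatching.injOn_snd (α := Fin q) (β := Fin r) M)
  unfold SzegoBlocks
  rw [Nat.card_sum, Nat.card_sum, Nat.card_eq_finsetCard]
  simp only [M.2.1, Fintype.card_fin] at hQ hR ⊢
  omega

lemma card_szegoMatching : Nat.card (SzegoMatching q r s) = q.choose s * r.descFactorial s := by
  have h := card_pairMatching (α := Fin q) (β := Fin r) s
  rwa [Fintype.card_fin, Fintype.card_fin] at h

lemma card_szegoConfig :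
    Nat.card (SzegoConfig q r s) = q.choose s * r.choose s * s ! * (q + r - s)! := by
  have e : SzegoConfig q r s ≃ SzegoMatching q r s × Equiv.Perm (Fin (q + r - s)) :=
    (Equiv.sigmaCongrRight fun M => (Equiv.refl _).equivCongr
      (Finite.equivFinOfCardEq (card_szegoBlocks M))).trans (Equiv.sigmaEquivProd _ _)
  rw [Nat.card_congr e, Nat.card_prod, card_szegoMatching, Nat.card_perm, Nat.card_fin,
    Nat.descFactorial_eq_factorial_mul_choose]
  ring

end Szego

lemma fwdDiff_iter_choose_eq_zero {m n : ℕ} (h : m < n) :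
    (Δ_[1])^[n] (fun x ↦ x.choose m : ℕ → ℤ) = 0 := by
  obtain ⟨k, rfl⟩ := Nat.exists_eq_add_of_lt h
  have hm := fwdDiff_iter_choose 0 m
  rw [add_zero] at hm
  rw [show m + k + 1 = k + 1 + m by omega, Function.iterate_add_apply, hm,
    Function.iterate_succ_apply]
  simp only [Nat.choose_zero_right, Nat.cast_one, fwdDiff_const]
  exact Function.iterate_fixed (fwdDiff_const (1 : ℕ) (0 : ℤ)) k

lemma alternating_sum_choose_mul_choose_sub_eq_zero {m q n : ℕ} (hmq : m < q) (hqn : q ≤ n) :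
    ∑ s ∈ range (q + 1), (-1 : ℤ) ^ s * q.choose s * (n - s).choose m = 0 := by
  have h := congrFun (fwdDiff_iter_choose_eq_zero hmq) (n - q)
  rw [fwdDiff_iter_eq_sum_shift, ← sum_range_reflect, Pi.zero_apply] at h
  rw [← h]
  refine sum_congr rfl fun s hs => ?_
  have hs : s ≤ q := Nat.lt_succ_iff.1 (mem_range.1 hs)
  rw [smul_eq_mul, Nat.add_sub_cancel, Nat.choose_symm hs, smul_eq_mul, mul_one,
    show q - (q - s) = s by omega, show n - q + (q - s) = n - s by omega]

lemma neg_one_pow_sub {R : Type*} [Monoid R] [HasDistribNeg R] {n s : ℕ} (h : s ≤ n) :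
    (-1 : R) ^ (n - s) = (-1) ^ n * (-1) ^ s := by
  obtain ⟨t, rfl⟩ := Nat.exists_eq_add_of_le h
  rw [Nat.add_sub_cancel_left, pow_add, mul_assoc, pow_mul_comm, ← mul_assoc, ← pow_add,
    Even.neg_one_pow ⟨s, rfl⟩, one_mul]

lemma choose_mul_factorial_mul_factorial_add_sub {q r s : ℕ} (hq : 1 ≤ q) (hs : s ≤ r) :
    r.choose s * s ! * (q + r - s)! =
      (q + r - s) * ((q - 1)! * r ! * (q + r - 1 - s).choose (q - 1)) := by
  have hr : r.choose s * s ! * (r - s)! = r ! := Nat.choose_mul_factorial_mul_factorial hs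
  have hqr : (q + r - 1 - s).choose (q - 1) * (q - 1)! * (r - s)! = (q + r - 1 - s)! := by
    rw [← Nat.choose_mul_factorial_mul_factorial (show q - 1 ≤ q + r - 1 - s by omega),
      show q + r - 1 - s - (q - 1) = r - s by omega]
  rw [show q + r - s = q + r - 1 - s + 1 by omega, Nat.factorial_succ, ← hr, ← hqr]
  ring

lemma szego_term_eq {q r s : ℕ} (hq : 1 ≤ q) (hs : s ≤ r) :
    (-1 : ℚ) ^ (q + r - s) / ((q + r - s : ℕ) : ℚ) *
        ((q.choose s * r.choose s * s ! * (q + r - s)! : ℕ) : ℚ) =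
      (-1) ^ (q + r) * ((q - 1)! * r ! : ℕ) *
        ((-1) ^ s * q.choose s * (q + r - 1 - s).choose (q - 1)) := by
  have hpos : ((q + r - s : ℕ) : ℚ) ≠ 0 := by norm_cast; omega
  rw [mul_assoc (q.choose s), mul_assoc (q.choose s),
    choose_mul_factorial_mul_factorial_add_sub hq hs, neg_one_pow_sub (by omega)]
  push_cast
  field_simp

/-- The number of ordered tuples of blocks with exactly `s` merged pairs is
`C(q,s) C(r,s) s! (q+r−s)!`, and for `q, r ≥ 1` the signed sum
`∑_{s=0}^{min(q,r)} ((-1)^{q+r-s}/(q+r-s)) C(q,s)C(r,s)s!(q+r−s)!` vanishes. -/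
theorem szego_config_count_and_vanish (q r : ℕ) (hq : 1 ≤ q) (hr : 1 ≤ r) :
    (∀ s ≤ min q r, Nat.card (SzegoConfig q r s) =
        q.choose s * r.choose s * s.factorial * (q + r - s).factorial)
    ∧ ∑ s ∈ Finset.range (min q r + 1),
        (-1 : ℚ) ^ (q + r - s) / ((q + r - s : ℕ) : ℚ) *
          (Nat.card (SzegoConfig q r s) : ℚ) = 0 := by
  refine ⟨fun s _ => card_szegoConfig, ?_⟩
  set c : ℚ := (-1) ^ (q + r) * ((q - 1)! * r ! : ℕ)
  have hvanish := congrArg (Int.cast : ℤ → ℚ) <|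
    alternating_sum_choose_mul_choose_sub_eq_zero (m := q - 1) (q := q) (n := q + r - 1)
      (by omega) (by omega)
  push_cast at hvanish
  calc _ = ∑ s ∈ range (min q r + 1),
        c * ((-1) ^ s * q.choose s * (q + r - 1 - s).choose (q - 1)) := by
        refine sum_congr rfl fun s hs => ?_
        rw [card_szegoConfig, szego_term_eq hq (by rw [mem_range] at hs; omega)]
    _ = ∑ s ∈ range (q + 1), c * ((-1) ^ s * q.choose s * (q + r - 1 - s).choose (q - 1)) := by
        refine sum_subset (range_subset_range.2 (by omega)) fun s hs hs' => ?_
        rw [mem_range] at hs hs'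
        rw [Nat.choose_eq_zero_of_lt (by omega : q + r - 1 - s < q - 1), Nat.cast_zero, mul_zero,
          mul_zero]
    _ = 0 := by rw [← mul_sum, hvanish, mul_zero]
end

section
/- Let (α_n) be a sequence of complex numbers with |α_n| < 1, liminf |α_n| > 0, and suppose that for every ℓ ≥ 1 the limit c_ℓ = lim_{n→∞} α_n·conj(α_{n−ℓ}) exists with c_1 = a²λ for some a ∈ (0,1] and |λ| = 1. Then |α_n| → a and α_{n+1}/α_n → λ as n → ∞, and consequently c_ℓ = a²λ^ℓ for all ℓ ≥ 1. -/
/-!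
With `x n = ‖α n‖`, the products `x (n + 1) * x n` and `x (n + 2) * x n` converge (to
`‖c 1‖ = a²` and `‖c 2‖`), and
`x (n + 1)² * (x (n + 2) * x n) = (x (n + 2) * x (n + 1)) * (x (n + 1) * x n)`.
Since `x ≤ 1` this forces `‖c 2‖ ≥ a⁴ > 0`, so `x (n + 1)²` converges, necessarily to `a²`.
Then `α (n + 1) / α n = α (n + 1) * conj (α n) / ‖α n‖² → a² λ / a² = λ`, and the identity
`(u * conj v) * (v * conj w) = ‖v‖² * (u * conj w)` turns the correlations into the recursion
`c k * c 1 = a² * c (k + 1)`.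
-/

open Filter Topology ComplexConjugate

theorem tendsto_sqrt_of_tendsto_mul_succ_of_tendsto_mul_add_two {x : ℕ → ℝ}
    (hx₀ : ∀ n, 0 ≤ x n) (hx₁ : ∀ n, x n ≤ 1) {b d : ℝ} (hb : 0 < b)
    (hp : Tendsto (fun n => x (n + 1) * x n) atTop (𝓝 b))
    (hq : Tendsto (fun n => x (n + 2) * x n) atTop (𝓝 d)) :
    Tendsto x atTop (𝓝 √b) := by
  have hpp : Tendsto (fun n => x (n + 2) * x (n + 1) * (x (n + 1) * x n)) atTop (𝓝 (b * b)) :=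
    ((tendsto_add_atTop_iff_nat 1).mpr hp).mul hp
  have hpp_eq (n : ℕ) :
      x (n + 2) * x (n + 1) * (x (n + 1) * x n) = x (n + 1) ^ 2 * (x (n + 2) * x n) := by
    ring
  have hd : b * b ≤ d := le_of_tendsto_of_tendsto' hpp hq fun n => by
    rw [hpp_eq]
    exact mul_le_of_le_one_left (mul_nonneg (hx₀ _) (hx₀ _)) (pow_le_one₀ (hx₀ _) (hx₁ _))
  have hd₀ : d ≠ 0 := (mul_pos hb hb |>.trans_le hd).ne'
  have hsq : Tendsto (fun n => x (n + 1) ^ 2) atTop (𝓝 (b * b / d)) := by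
    refine (hpp.div hq hd₀).congr' ?_
    filter_upwards [hq.eventually_ne hd₀] with n hn
    rw [Pi.div_apply, hpp_eq, mul_div_cancel_right₀ _ hn]
  set s := √(b * b / d)
  have hs : Tendsto x atTop (𝓝 s) := by
    refine (tendsto_add_atTop_iff_nat 1).mp (hsq.sqrt.congr fun n => ?_)
    exact Real.sqrt_sq (hx₀ _)
  have hss : s * s = b :=
    tendsto_nhds_unique (((tendsto_add_atTop_iff_nat 1).mpr hs).mul hs) hp
  rwa [← hss, Real.sqrt_mul_self (Real.sqrt_nonneg _)]

section RCLike

variable {𝕜 : Type*} [RCLike 𝕜]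

theorem mul_conj_mul_mul_conj (x y z : 𝕜) :
    x * conj y * (y * conj z) = (‖y‖ : 𝕜) ^ 2 * (x * conj z) := by
  rw [← RCLike.mul_conj]
  ring

theorem div_eq_mul_conj_div_sq (x y : 𝕜) : x / y = x * conj y / (‖y‖ : 𝕜) ^ 2 := by
  rw [div_eq_mul_inv, RCLike.inv_def]
  push_cast
  ring

theorem tendsto_div_of_tendsto_mul_conj {ι : Type*} {l : Filter ι} {x y : ι → 𝕜} {c : 𝕜} {r : ℝ}
    (hxy : Tendsto (fun n => x n * conj (y n)) l (𝓝 c)) (hy : Tendsto (fun n => ‖y n‖) l (𝓝 r))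
    (hr : r ≠ 0) :
    Tendsto (fun n => x n / y n) l (𝓝 (c / (r : 𝕜) ^ 2)) := by
  exact (hxy.div (((RCLike.continuous_ofReal (K := 𝕜)).tendsto r).comp hy |>.pow 2)
    (by simpa using hr)).congr fun n => (div_eq_mul_conj_div_sq _ _).symm

theorem tendsto_mul_conj_add_of_tendsto_mul_conj_sub {α : ℕ → 𝕜} {ℓ : ℕ} {c : 𝕜}
    (h : Tendsto (fun n => α n * conj (α (n - ℓ))) atTop (𝓝 c)) :
    Tendsto (fun n => α (n + ℓ) * conj (α n)) atTop (𝓝 c) := by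
  simpa using (tendsto_add_atTop_iff_nat ℓ).mpr h

theorem mul_eq_sq_mul_of_tendsto_mul_conj {α : ℕ → 𝕜} {j k : ℕ} {cj ck cjk : 𝕜} {r : ℝ}
    (hj : Tendsto (fun n => α (n + j) * conj (α n)) atTop (𝓝 cj))
    (hk : Tendsto (fun n => α (n + k) * conj (α n)) atTop (𝓝 ck))
    (hjk : Tendsto (fun n => α (n + (j + k)) * conj (α n)) atTop (𝓝 cjk))
    (hr : Tendsto (fun n => ‖α n‖) atTop (𝓝 r)) :
    cj * ck = (r : 𝕜) ^ 2 * cjk := by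
  have hprod := ((tendsto_add_atTop_iff_nat k).mpr hj).mul hk
  have hsq := ((RCLike.continuous_ofReal (K := 𝕜)).tendsto r).comp
    ((tendsto_add_atTop_iff_nat k).mpr hr)
  refine tendsto_nhds_unique (hprod.congr fun n => ?_) ((hsq.pow 2).mul hjk)
  rw [mul_conj_mul_mul_conj, add_comm j k, ← add_assoc]
  rfl

end RCLike

theorem mate_nevai_structure_general (α : ℕ → ℂ) (hα : ∀ n, ‖α n‖ < 1)
    (c : ℕ → ℂ)
    (hc : ∀ ℓ : ℕ, 1 ≤ ℓ →
      Tendsto (fun n => α n * (starRingEnd ℂ) (α (n - ℓ))) atTop (nhds (c ℓ)))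
    (a : ℝ) (ha : a ∈ Set.Ioc (0 : ℝ) 1) (lam : ℂ) (hlam : ‖lam‖ = 1)
    (hc1 : c 1 = (a : ℂ) ^ 2 * lam) :
    Tendsto (fun n => ‖α n‖) atTop (nhds a)
    ∧ Tendsto (fun n => α (n + 1) / α n) atTop (nhds lam)
    ∧ ∀ ℓ : ℕ, 1 ≤ ℓ → c ℓ = (a : ℂ) ^ 2 * lam ^ ℓ := by
  obtain ⟨ha₀, -⟩ := ha
  have hshift (ℓ : ℕ) (hℓ : 1 ≤ ℓ) : Tendsto (fun n => α (n + ℓ) * conj (α n)) atTop (𝓝 (c ℓ)) :=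
    tendsto_mul_conj_add_of_tendsto_mul_conj_sub (hc ℓ hℓ)
  have hc1_norm : ‖c 1‖ = a ^ 2 := by
    rw [hc1, norm_mul, hlam, mul_one, norm_pow, Complex.norm_real, Real.norm_of_nonneg ha₀.le]
  have hnorm : Tendsto (fun n => ‖α n‖) atTop (𝓝 a) := by
    have h := tendsto_sqrt_of_tendsto_mul_succ_of_tendsto_mul_add_two (fun n => norm_nonneg (α n))
      (fun n => (hα n).le) (pow_pos ha₀ 2) (by simpa [hc1_norm] using (hshift 1 le_rfl).norm)
      (by simpa using (hshift 2 one_le_two).norm)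
    rwa [Real.sqrt_sq ha₀.le] at h
  have ha_sq : (a : ℂ) ^ 2 ≠ 0 := by exact_mod_cast (pow_pos ha₀ 2).ne'
  have hratio : Tendsto (fun n => α (n + 1) / α n) atTop (𝓝 (c 1 / (a : ℂ) ^ 2)) :=
    tendsto_div_of_tendsto_mul_conj (hshift 1 le_rfl) hnorm ha₀.ne'
  rw [hc1, mul_div_cancel_left₀ _ ha_sq] at hratio
  refine ⟨hnorm, hratio, Nat.le_induction (by simpa using hc1) fun k hk ih => ?_⟩
  have hrec : c k * c 1 = (a : ℂ) ^ 2 * c (k + 1) :=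
    mul_eq_sq_mul_of_tendsto_mul_conj (hshift k hk) (hshift 1 le_rfl) (hshift (k + 1) (by omega))
      hnorm
  rw [ih, hc1] at hrec
  refine mul_left_cancel₀ ha_sq ?_
  rw [← hrec]
  ring

/-- If `‖α_n‖ < 1`, `liminf ‖α_n‖ > 0`, and for each `ℓ ≥ 1` the limit
`c_ℓ = lim_n α_n conj(α_{n-ℓ})` exists with `c_1 = a²λ`, `a ∈ (0,1]`, `|λ| = 1`,
then `‖α_n‖ → a`, `α_{n+1}/α_n → λ`, and `c_ℓ = a²λ^ℓ` for all `ℓ ≥ 1`. -/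
theorem mate_nevai_structure (α : ℕ → ℂ) (hα : ∀ n, ‖α n‖ < 1)
    (hinf : 0 < Filter.atTop.liminf fun n => ‖α n‖)
    (c : ℕ → ℂ)
    (hc : ∀ ℓ : ℕ, 1 ≤ ℓ →
      Tendsto (fun n => α n * (starRingEnd ℂ) (α (n - ℓ))) atTop (nhds (c ℓ)))
    (a : ℝ) (ha : a ∈ Set.Ioc (0 : ℝ) 1) (lam : ℂ) (hlam : ‖lam‖ = 1)
    (hc1 : c 1 = (a : ℂ) ^ 2 * lam) :
    Tendsto (fun n => ‖α n‖) atTop (nhds a)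
    ∧ Tendsto (fun n => α (n + 1) / α n) atTop (nhds lam)
    ∧ ∀ ℓ : ℕ, 1 ≤ ℓ → c ℓ = (a : ℂ) ^ 2 * lam ^ ℓ :=
  mate_nevai_structure_general α hα c hc a ha lam hlam hc1
end
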